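/- arXiv:1203.5822 — 10 statements merged into one kernel-verified Lean document; each statement's English description precedes it below -/
import Mathlib

section
/- Let R be a finite set of arcs with cost functions c_r strictly increasing, convex, continuously differentiable and nonnegative on [0,1]. Let x be a composite equilibrium of the game with coalitions 1,…,K and individuals, i.e. (a) every arc r with x^0_r > 0 minimizes c_s(x_s) over s ∈ R, and (b) for every coalition k, every arc r with x^k_r > 0 minimizes the marginal cost c_s(x_s) + x^k_s · c'_s(x_s) over s ∈ R. Then for any coalition k, any arc r used by coalition k (x^k_r > 0) and any arc s not used by coalition k (x^k_s = 0), one has c_r(x_r) < c_s(x_s). -/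
/-- At a composite equilibrium, an arc used by coalition `k` has strictly smaller cost
than any arc not used by coalition `k`. -/
theorem used_arc_cheaper {R : Type*} [Fintype R] [Nonempty R] {K : ℕ}
    (c c' : R → ℝ → ℝ)
    (x0 : R → ℝ) (x : Fin K → R → ℝ)
    (hx0 : ∀ r, 0 ≤ x0 r) (hx : ∀ k r, 0 ≤ x k r)
    (X : R → ℝ) (hX : ∀ r, X r = x0 r + ∑ k, x k r)
    (htot : ∑ r, X r = 1)
    (hmono : ∀ r, StrictMonoOn (c r) (Set.Icc 0 1))
    (hconv : ∀ r, ConvexOn ℝ (Set.Icc 0 1) (c r))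
    (hderiv : ∀ r, ∀ y ∈ Set.Icc (0:ℝ) 1, HasDerivAt (c r) (c' r y) y)
    (hcnonneg : ∀ r, ∀ y ∈ Set.Icc (0:ℝ) 1, 0 ≤ c r y)
    (heq0 : ∀ r, 0 < x0 r → ∀ s, c r (X r) ≤ c s (X s))
    (heqk : ∀ k r, 0 < x k r → ∀ s,
      c r (X r) + x k r * c' r (X r) ≤ c s (X s) + x k s * c' s (X s)) :
    ∀ k r s, 0 < x k r → x k s = 0 → c r (X r) < c s (X s) := by
  intro k r s hkr hks
  -- X is nonnegative
  have hXnn : ∀ t, 0 ≤ X t := by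
    intro t
    rw [hX t]
    exact add_nonneg (hx0 t) (Finset.sum_nonneg fun j _ => hx j t)
  -- X r ≤ 1
  have hXle : ∀ t, X t ≤ 1 := by
    intro t
    rw [← htot]
    exact Finset.single_le_sum (fun j _ => hXnn j) (Finset.mem_univ t)
  have hXrpos : 0 < X r := by
    have : x k r ≤ X r := by
      rw [hX r]
      have : x k r ≤ ∑ j, x j r :=
        Finset.single_le_sum (fun j _ => hx j r) (Finset.mem_univ k)
      linarith [hx0 r]
    linarith
  have hXrmem : X r ∈ Set.Icc (0:ℝ) 1 := ⟨hXnn r, hXle r⟩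
  have h0mem : (0:ℝ) ∈ Set.Icc (0:ℝ) 1 := ⟨le_refl 0, zero_le_one⟩
  -- derivative at X r is positive
  have hslope : slope (c r) 0 (X r) ≤ c' r (X r) :=
    (hconv r).slope_le_of_hasDerivWithinAt_Iio h0mem hXrmem hXrpos
      ((hderiv r (X r) hXrmem).hasDerivWithinAt)
  have hslopepos : 0 < slope (c r) 0 (X r) := by
    rw [slope_def_field]
    apply div_pos
    · have := hmono r h0mem hXrmem hXrpos
      simpa using this
    · simpa using hXrpos
  have hc'pos : 0 < c' r (X r) := lt_of_lt_of_le hslopepos hslope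
  have h := heqk k r hkr s
  rw [hks] at h
  nlinarith [mul_pos hkr hc'pos]
end

section
/- Under the composite equilibrium conditions (Wardrop for individuals, marginal-cost minimality for coalitions) with cost functions strictly increasing, convex, C¹ and nonnegative on [0,1]: for every coalition k with weight T^k > 0, any arc used by the individuals (x^0_r > 0) is also used by coalition k (x^k_r > 0). -/
/-- At a composite equilibrium, an arc used by the individuals is also used by every
coalition of positive weight. -/
theorem individuals_arcs_used_by_coalitions {R : Type*} [Fintype R] [Nonempty R] {K : ℕ}
    (c c' : R → ℝ → ℝ)
    (x0 : R → ℝ) (x : Fin K → R → ℝ)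
    (hx0 : ∀ r, 0 ≤ x0 r) (hx : ∀ k r, 0 ≤ x k r)
    (X : R → ℝ) (hX : ∀ r, X r = x0 r + ∑ k, x k r)
    (htot : ∑ r, X r = 1)
    (hmono : ∀ r, StrictMonoOn (c r) (Set.Icc 0 1))
    (hconv : ∀ r, ConvexOn ℝ (Set.Icc 0 1) (c r))
    (hderiv : ∀ r, ∀ y ∈ Set.Icc (0:ℝ) 1, HasDerivAt (c r) (c' r y) y)
    (hcnonneg : ∀ r, ∀ y ∈ Set.Icc (0:ℝ) 1, 0 ≤ c r y)
    (heq0 : ∀ r, 0 < x0 r → ∀ s, c r (X r) ≤ c s (X s))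
    (heqk : ∀ k r, 0 < x k r → ∀ s,
      c r (X r) + x k r * c' r (X r) ≤ c s (X s) + x k s * c' s (X s)) :
    ∀ k : Fin K, 0 < ∑ r, x k r → ∀ r, 0 < x0 r → 0 < x k r := by
  intro k hk r hr
  by_contra hzero
  push_neg at hzero
  have hxkr : x k r = 0 := le_antisymm hzero (hx k r)
  obtain ⟨s, hs⟩ : ∃ s, 0 < x k s := by
    by_contra h
    push_neg at h
    have : ∑ t, x k t ≤ 0 := Finset.sum_nonpos fun t _ => h t
    linarith
  have hXnn : ∀ t, 0 ≤ X t := fun t => by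
    rw [hX t]
    exact add_nonneg (hx0 t) (Finset.sum_nonneg fun j _ => hx j t)
  have hXle : ∀ t, X t ≤ 1 := fun t =>
    htot ▸ Finset.single_le_sum (fun i _ => hXnn i) (Finset.mem_univ t)
  have hXs_pos : 0 < X s := by
    have h1 : x k s ≤ ∑ j, x j s := Finset.single_le_sum (fun j _ => hx j s) (Finset.mem_univ k)
    have := hx0 s
    rw [hX s]; linarith
  have hmem : X s ∈ Set.Icc (0:ℝ) 1 := ⟨hXnn s, hXle s⟩
  have h0mem : (0:ℝ) ∈ Set.Icc (0:ℝ) 1 := ⟨le_refl 0, zero_le_one⟩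
  have hslope : slope (c s) 0 (X s) ≤ c' s (X s) :=
    (hconv s).slope_le_of_hasDerivAt h0mem hmem hXs_pos (hderiv s _ hmem)
  have hcs : c s 0 < c s (X s) := (hmono s) h0mem hmem hXs_pos
  have hslope_pos : 0 < slope (c s) 0 (X s) := by
    rw [slope_def_field]
    apply div_pos (by linarith) (by linarith)
  have hd : 0 < c' s (X s) := lt_of_lt_of_le hslope_pos hslope
  have h1 := heqk k s hs r
  have h2 := heq0 r hr s
  rw [hxkr] at h1
  nlinarith [mul_pos hs hd]
end

section
/- At a composite equilibrium, if T^0 > 0 then for every coalition k the average cost to the coalition Y^k = (1/T^k) Σ_r x^k_r c_r(x_r) is at least the individuals' cost Y^0 = min_r c_r(x_r), and the minimum cost among arcs used by coalition k equals Y^0. -/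
/-- At a composite equilibrium with individuals of positive weight, the average cost of
each coalition of positive weight is at least the individuals' cost
(the minimal arc cost), and some arc used by the coalition attains the individuals' cost,
i.e. the minimum cost among arcs used by the coalition equals the individuals' cost. -/
theorem coalition_avg_cost_ge_individuals {R : Type*} [Fintype R] [Nonempty R] {K : ℕ}
    (c c' : R → ℝ → ℝ)
    (x0 : R → ℝ) (x : Fin K → R → ℝ)
    (hx0 : ∀ r, 0 ≤ x0 r) (hx : ∀ k r, 0 ≤ x k r)
    (X : R → ℝ) (hX : ∀ r, X r = x0 r + ∑ k, x k r)
    (htot : ∑ r, X r = 1)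
    (hmono : ∀ r, StrictMonoOn (c r) (Set.Icc 0 1))
    (hconv : ∀ r, ConvexOn ℝ (Set.Icc 0 1) (c r))
    (hderiv : ∀ r, ∀ y ∈ Set.Icc (0:ℝ) 1, HasDerivAt (c r) (c' r y) y)
    (hcnonneg : ∀ r, ∀ y ∈ Set.Icc (0:ℝ) 1, 0 ≤ c r y)
    (heq0 : ∀ r, 0 < x0 r → ∀ s, c r (X r) ≤ c s (X s))
    (heqk : ∀ k r, 0 < x k r → ∀ s,
      c r (X r) + x k r * c' r (X r) ≤ c s (X s) + x k s * c' s (X s))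
    (hT0 : 0 < ∑ r, x0 r) :
    ∀ k : Fin K, 0 < ∑ r, x k r →
      (Finset.univ.inf' Finset.univ_nonempty (fun s => c s (X s)) ≤
        (1 / ∑ r, x k r) * ∑ r, x k r * c r (X r)) ∧
      (∃ r, 0 < x k r ∧
        c r (X r) = Finset.univ.inf' Finset.univ_nonempty (fun s => c s (X s))) := by
  intro k hTk
  set Y0 := Finset.univ.inf' Finset.univ_nonempty (fun s => c s (X s)) with hY0
  have hXnn : ∀ r, 0 ≤ X r := by
    intro r
    rw [hX r]
    exact add_nonneg (hx0 r) (Finset.sum_nonneg fun j _ => hx j r)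
  have hXle1 : ∀ r, X r ≤ 1 := by
    intro r
    rw [← htot]
    exact Finset.single_le_sum (fun s _ => hXnn s) (Finset.mem_univ r)
  have hXmem : ∀ r, X r ∈ Set.Icc (0:ℝ) 1 := fun r => ⟨hXnn r, hXle1 r⟩
  have hY0le : ∀ r, Y0 ≤ c r (X r) := fun r =>
    Finset.inf'_le _ (Finset.mem_univ r)
  constructor
  · have h1 : Y0 * (∑ r, x k r) ≤ ∑ r, x k r * c r (X r) := by
      have : ∑ r, x k r * Y0 ≤ ∑ r, x k r * c r (X r) :=
        Finset.sum_le_sum fun r _ => mul_le_mul_of_nonneg_left (hY0le r) (hx k r)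
      rw [← Finset.sum_mul] at this
      linarith [this]
    rw [one_div, mul_comm, ← div_eq_mul_inv, le_div_iff₀ hTk]
    exact h1
  · -- find r0 with x0 r0 > 0
    obtain ⟨r0, hr0⟩ : ∃ r, 0 < x0 r := by
      by_contra h
      push_neg at h
      have : ∑ r, x0 r ≤ 0 := Finset.sum_nonpos fun r _ => h r
      linarith
    have hr0min : c r0 (X r0) = Y0 :=
      le_antisymm (Finset.le_inf' _ _ fun s _ => heq0 r0 hr0 s) (hY0le r0)
    obtain ⟨r1, hr1⟩ : ∃ r, 0 < x k r := by
      by_contra h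
      push_neg at h
      have : ∑ r, x k r ≤ 0 := Finset.sum_nonpos fun r _ => h r
      linarith
    by_cases hc1 : c r1 (X r1) = Y0
    · exact ⟨r1, hr1, hc1⟩
    by_cases hk0 : 0 < x k r0
    · exact ⟨r0, hk0, hr0min⟩
    · exfalso
      have hk0' : x k r0 = 0 := le_antisymm (not_lt.mp hk0) (hx k r0)
      have hlt : Y0 < c r1 (X r1) := lt_of_le_of_ne (hY0le r1) (Ne.symm hc1)
      have h2 := heqk k r1 hr1 r0
      rw [hk0', hr0min] at h2
      -- h2 : c r1 (X r1) + x k r1 * c' r1 (X r1) ≤ Y0 + 0 * c' r0 (X r0)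
      have hderivneg : c' r1 (X r1) < 0 := by
        nlinarith [hr1]
      -- but derivative is positive since c r1 strictly increasing, X r1 > 0
      have hXpos : 0 < X r1 := by
        have := hX r1
        have hle : x k r1 ≤ ∑ j, x j r1 :=
          Finset.single_le_sum (fun j _ => hx j r1) (Finset.mem_univ k)
        nlinarith [hx0 r1]
      have hslope : slope (c r1) 0 (X r1) ≤ c' r1 (X r1) :=
        (hconv r1).slope_le_of_hasDerivWithinAt (by simp : (0:ℝ) ∈ Set.Icc (0:ℝ) 1)
          (hXmem r1) hXpos ((hderiv r1 (X r1) (hXmem r1)).hasDerivWithinAt)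
      have hcinc : c r1 0 < c r1 (X r1) :=
        hmono r1 (by simp) (hXmem r1) hXpos
      have : 0 < slope (c r1) 0 (X r1) := by
        rw [slope_def_field]
        apply div_pos (by linarith)
        simpa using hXpos
      linarith
end

section
/- At a composite equilibrium, if coalitions k and l satisfy T^k < T^l, then the support of coalition k's flow is contained in the support of coalition l's flow: x^k_r > 0 implies x^l_r > 0 for every arc r. -/
/-- At a composite equilibrium, the support of a smaller coalition's flow is contained
in the support of a larger coalition's flow. -/
theorem support_monotone_in_size {R : Type*} [Fintype R] [Nonempty R] {K : ℕ}
    (c c' : R → ℝ → ℝ)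
    (x0 : R → ℝ) (x : Fin K → R → ℝ)
    (hx0 : ∀ r, 0 ≤ x0 r) (hx : ∀ k r, 0 ≤ x k r)
    (X : R → ℝ) (hX : ∀ r, X r = x0 r + ∑ k, x k r)
    (htot : ∑ r, X r = 1)
    (hmono : ∀ r, StrictMonoOn (c r) (Set.Icc 0 1))
    (hconv : ∀ r, ConvexOn ℝ (Set.Icc 0 1) (c r))
    (hderiv : ∀ r, ∀ y ∈ Set.Icc (0:ℝ) 1, HasDerivAt (c r) (c' r y) y)
    (hcnonneg : ∀ r, ∀ y ∈ Set.Icc (0:ℝ) 1, 0 ≤ c r y)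
    (heq0 : ∀ r, 0 < x0 r → ∀ s, c r (X r) ≤ c s (X s))
    (heqk : ∀ k r, 0 < x k r → ∀ s,
      c r (X r) + x k r * c' r (X r) ≤ c s (X s) + x k s * c' s (X s)) :
    ∀ k l : Fin K, (∑ r, x k r) < (∑ r, x l r) →
      ∀ r, 0 < x k r → 0 < x l r := by
  -- basic facts about X
  have hXnn : ∀ r, 0 ≤ X r := by
    intro r
    rw [hX r]
    exact add_nonneg (hx0 r) (Finset.sum_nonneg fun k _ => hx k r)
  have hXmem : ∀ r, X r ∈ Set.Icc (0:ℝ) 1 := by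
    intro r
    refine ⟨hXnn r, ?_⟩
    rw [← htot]
    exact Finset.single_le_sum (fun s _ => hXnn s) (Finset.mem_univ r)
  -- derivative is positive wherever aggregate flow is positive
  have hc'pos : ∀ r, 0 < X r → 0 < c' r (X r) := by
    intro r hr
    have hslope := (hconv r).slope_le_of_hasDerivAt (x := 0)
      (Set.left_mem_Icc.2 zero_le_one) (hXmem r) hr (hderiv r _ (hXmem r))
    have hlt : c r 0 < c r (X r) :=
      hmono r (Set.left_mem_Icc.2 zero_le_one) (hXmem r) hr
    have : (0:ℝ) < slope (c r) 0 (X r) := by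
      rw [slope_def_field]
      exact div_pos (by simpa using sub_pos.2 hlt) (by simpa using hr)
    linarith
  intro k l hkl r hkr
  by_contra hlr
  have hlr0 : x l r = 0 := le_antisymm (not_lt.1 hlr) (hx l r)
  -- find an arc where l has more flow than k
  obtain ⟨s, -, hs⟩ := Finset.exists_lt_of_sum_lt hkl
  have hls : 0 < x l s := lt_of_le_of_lt (hx k s) hs
  -- equilibrium inequalities
  have h1 := heqk k r hkr s
  have h2 := heqk l s hls r
  rw [hlr0, zero_mul, add_zero] at h2
  -- X r, X s positive
  have hXr : 0 < X r := by
    rw [hX r]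
    have : 0 < ∑ k', x k' r :=
      Finset.sum_pos' (fun k' _ => hx k' r) ⟨k, Finset.mem_univ k, hkr⟩
    linarith [hx0 r]
  have hXs : 0 < X s := by
    rw [hX s]
    have : 0 < ∑ k', x k' s :=
      Finset.sum_pos' (fun k' _ => hx k' s) ⟨l, Finset.mem_univ l, hls⟩
    linarith [hx0 s]
  have hcr := hc'pos r hXr
  have hcs := hc'pos s hXs
  nlinarith [mul_pos hkr hcr, mul_lt_mul_of_pos_right hs hcs]
end

section
/- At a composite equilibrium, if coalitions k and l satisfy T^k < T^l, then the common marginal cost of coalition k is strictly less than that of coalition l: ĉ^k < ĉ^l, where ĉ^k is the common value of c_r(x_r)+x^k_r c'_r(x_r) on arcs used by k. -/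
/-- At a composite equilibrium, the common marginal cost of a smaller coalition is
strictly less than that of a larger coalition: on any arc used by `k` and any arc used
by `l`, coalition `k`'s marginal cost is strictly below coalition `l`'s. -/
theorem marginal_cost_monotone_in_size {R : Type*} [Fintype R] [Nonempty R] {K : ℕ}
    (c c' : R → ℝ → ℝ)
    (x0 : R → ℝ) (x : Fin K → R → ℝ)
    (hx0 : ∀ r, 0 ≤ x0 r) (hx : ∀ k r, 0 ≤ x k r)
    (X : R → ℝ) (hX : ∀ r, X r = x0 r + ∑ k, x k r)
    (htot : ∑ r, X r = 1)
    (hmono : ∀ r, StrictMonoOn (c r) (Set.Icc 0 1))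
    (hconv : ∀ r, ConvexOn ℝ (Set.Icc 0 1) (c r))
    (hderiv : ∀ r, ∀ y ∈ Set.Icc (0:ℝ) 1, HasDerivAt (c r) (c' r y) y)
    (hcnonneg : ∀ r, ∀ y ∈ Set.Icc (0:ℝ) 1, 0 ≤ c r y)
    (heq0 : ∀ r, 0 < x0 r → ∀ s, c r (X r) ≤ c s (X s))
    (heqk : ∀ k r, 0 < x k r → ∀ s,
      c r (X r) + x k r * c' r (X r) ≤ c s (X s) + x k s * c' s (X s))
    (hdpos : ∀ r, ∀ y ∈ Set.Icc (0:ℝ) 1, 0 < c' r y) :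
    ∀ k l : Fin K, (∑ r, x k r) < (∑ r, x l r) →
      ∀ r s, 0 < x k r → 0 < x l s →
        c r (X r) + x k r * c' r (X r) < c s (X s) + x l s * c' s (X s) := by
  intro k l hkl r s hkr hls
  -- X is nonnegative and each X r ≤ 1
  have hXnn : ∀ t, 0 ≤ X t := by
    intro t
    rw [hX t]
    have : (0:ℝ) ≤ ∑ j, x j t := Finset.sum_nonneg fun j _ => hx j t
    linarith [hx0 t]
  have hXmem : ∀ t, X t ∈ Set.Icc (0:ℝ) 1 := by
    intro t
    refine ⟨hXnn t, ?_⟩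
    have : X t ≤ ∑ u, X u :=
      Finset.single_le_sum (fun u _ => hXnn u) (Finset.mem_univ t)
    linarith [htot]
  -- find an arc where l sends strictly more than k
  obtain ⟨t, ht⟩ : ∃ t, x k t < x l t := by
    by_contra h
    push_neg at h
    have : (∑ r, x l r) ≤ ∑ r, x k r :=
      Finset.sum_le_sum fun u _ => h u
    linarith
  have hlt : 0 < x l t := lt_of_le_of_lt (hx k t) ht
  have h1 : c r (X r) + x k r * c' r (X r) ≤ c t (X t) + x k t * c' t (X t) :=
    heqk k r hkr t
  have h2 : c t (X t) + x k t * c' t (X t) < c t (X t) + x l t * c' t (X t) := by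
    have := hdpos t (X t) (hXmem t)
    nlinarith
  have h3 : c t (X t) + x l t * c' t (X t) ≤ c s (X s) + x l s * c' s (X s) :=
    heqk l t hlt s
  linarith
end

section
/- At a composite equilibrium, if coalitions k and l satisfy T^k < T^l, then the average costs satisfy Y^k ≤ Y^l, where Y^k = (1/T^k) Σ_r x^k_r c_r(x_r). -/
/-!
Write `d r = c' r (X r)`, which is positive on every route in use because `c r` is convex and
strictly increasing. Equilibrium of coalition `k` says its marginal cost `c r (X r) + x k r * d r`
equals a level `L k` on its support and is at least `L k` elsewhere, so
`T k * Y k = L k * T k - ∑ r, x k r ^ 2 * d r`. If `T k < T l` then `L k < L l`, so the support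
of `k` lies in that of `l` and `(x l r - x k r) * d r = L l - L k` there. Summing the marginal
costs bounds `∑ r, x l r ^ 2 * d r`, and Cauchy–Schwarz on the support of `k` bounds
`(L l - L k) * T k ^ 2` by `(∑ r, x k r ^ 2 * d r) * (T l - T k)`; together they give
`Y k ≤ Y l`.
-/

open Finset

lemma ConvexOn.hasDerivAt_pos_of_strictMonoOn {S : Set ℝ} {f : ℝ → ℝ} {f' x y : ℝ}
    (hconv : ConvexOn ℝ S f) (hmono : StrictMonoOn f S) (hx : x ∈ S) (hy : y ∈ S)
    (hxy : x < y) (hf : HasDerivAt f f' y) : 0 < f' :=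
  (hmono.slope_pos hx hy hxy.ne).trans_le (hconv.slope_le_of_hasDerivAt hx hy hxy hf)

section MarginalCost

variable {R : Type*} {g d a b : R → ℝ} {L La Lb : ℝ}

def IsMarginalEquilibrium (g d a : R → ℝ) : Prop :=
  ∀ r, 0 < a r → ∀ s, g r + a r * d r ≤ g s + a s * d s

structure IsMarginalLevel (g d a : R → ℝ) (L : ℝ) : Prop where
  le : ∀ r, L ≤ g r + a r * d r
  eq_of_pos : ∀ r, 0 < a r → g r + a r * d r = L

lemma IsMarginalEquilibrium.exists_isMarginalLevel (h : IsMarginalEquilibrium g d a) {r₀ : R}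
    (hr₀ : 0 < a r₀) : ∃ L, IsMarginalLevel g d a L :=
  ⟨_, h r₀ hr₀, fun r hr => le_antisymm (h r hr r₀) (h r₀ hr₀ r)⟩

lemma IsMarginalLevel.sub_mul_eq (hA : IsMarginalLevel g d a La) (hB : IsMarginalLevel g d b Lb)
    (hda : ∀ r, 0 < a r → 0 < d r) (hlt : La < Lb) {r : R} (hr : 0 < a r) :
    (b r - a r) * d r = Lb - La := by
  have hd := hda r hr
  have hmarg : 0 < b r * d r := by linarith [hB.le r, hA.eq_of_pos r hr, mul_pos hr hd]
  have hbr : 0 < b r := pos_of_mul_pos_left hmarg hd.le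
  linear_combination hB.eq_of_pos r hbr - hA.eq_of_pos r hr

variable [Fintype R]

lemma IsMarginalLevel.sum_mul_eq (hA : IsMarginalLevel g d a L) (ha : ∀ r, 0 ≤ a r) :
    ∑ r, a r * g r = L * ∑ r, a r - ∑ r, a r ^ 2 * d r := by
  have key : ∀ r, a r * g r = L * a r - a r ^ 2 * d r := by
    intro r
    rcases (ha r).eq_or_lt with h | h
    · rw [← h]; ring
    · linear_combination a r * hA.eq_of_pos r h
  simp only [key, sum_sub_distrib, mul_sum]

lemma IsMarginalLevel.lt (hA : IsMarginalLevel g d a La) (hB : IsMarginalLevel g d b Lb)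
    (ha : ∀ r, 0 ≤ a r) (hb : ∀ r, 0 ≤ b r) (hdb : ∀ r, 0 < b r → 0 < d r)
    (hsum : ∑ r, a r < ∑ r, b r) : La < Lb := by
  by_contra! hle
  have hba : ∀ r, b r ≤ a r := by
    intro r
    rcases (hb r).eq_or_lt with h | h
    · exact h ▸ ha r
    · have hmarg : b r * d r ≤ a r * d r := by linarith [hB.eq_of_pos r h, hA.le r]
      exact le_of_mul_le_mul_right hmarg (hdb r h)
  exact hsum.not_ge (sum_le_sum fun r _ => hba r)

lemma IsMarginalLevel.sum_sq_mul_le (hA : IsMarginalLevel g d a La)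
    (hB : IsMarginalLevel g d b Lb) (ha : ∀ r, 0 ≤ a r) (hb : ∀ r, 0 ≤ b r)
    (hda : ∀ r, 0 < a r → 0 < d r) (hlt : La < Lb) :
    ∑ r, b r ^ 2 * d r ≤ ∑ r, a r ^ 2 * d r + (Lb - La) * (∑ r, a r + ∑ r, b r) := by
  have key : ∀ r, b r ^ 2 * d r ≤ a r ^ 2 * d r + (Lb - La) * (a r + b r) := by
    intro r
    rcases (ha r).eq_or_lt with har | har
    · rw [← har]
      rcases (hb r).eq_or_lt with hbr | hbr
      · simp [← hbr]
      · have hmarg : b r * d r ≤ Lb - La := by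
          linarith [hB.eq_of_pos r hbr, har ▸ hA.le r]
        nlinarith
    · linear_combination (a r + b r) * hA.sub_mul_eq hB hda hlt har
  calc ∑ r, b r ^ 2 * d r ≤ ∑ r, (a r ^ 2 * d r + (Lb - La) * (a r + b r)) :=
        sum_le_sum fun r _ => key r
    _ = _ := by simp only [sum_add_distrib, ← mul_sum]

lemma IsMarginalLevel.mul_sq_sum_le (hA : IsMarginalLevel g d a La)
    (hB : IsMarginalLevel g d b Lb) (ha : ∀ r, 0 ≤ a r) (hb : ∀ r, 0 ≤ b r)
    (hda : ∀ r, 0 < a r → 0 < d r) (hlt : La < Lb) :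
    (Lb - La) * (∑ r, a r) ^ 2 ≤ (∑ r, a r ^ 2 * d r) * (∑ r, b r - ∑ r, a r) := by
  have hΔ : 0 < Lb - La := sub_pos.2 hlt
  -- on the support of `a`, `a r ^ 2 = (a r ^ 2 * d r) * ((b r - a r) / (Lb - La))`
  have hcs : (∑ r, a r) ^ 2 ≤ (∑ r, a r ^ 2 * d r) * ∑ r, (b r - a r) / (Lb - La) := by
    refine sum_sq_le_sum_mul_sum_of_sq_le_mul _ (fun r _ => ?_) (fun r _ => ?_) (fun r _ => ?_)
    all_goals rcases (ha r).eq_or_lt with har | har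
    · simp [← har]
    · exact mul_nonneg (sq_nonneg _) (hda r har).le
    · simpa [← har] using div_nonneg (hb r) hΔ.le
    · have hgap : 0 < (b r - a r) * d r := hA.sub_mul_eq hB hda hlt har ▸ hΔ
      exact div_nonneg (pos_of_mul_pos_left hgap (hda r har).le).le hΔ.le
    · simp [← har]
    · rw [mul_assoc, mul_div_assoc', mul_comm (d r), hA.sub_mul_eq hB hda hlt har,
        div_self hΔ.ne', mul_one]
  rw [← sum_div, sum_sub_distrib, mul_div_assoc', le_div_iff₀ hΔ] at hcs
  linarith

theorem IsMarginalEquilibrium.sum_mul_div_le (hA : IsMarginalEquilibrium g d a)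
    (hB : IsMarginalEquilibrium g d b) (ha : ∀ r, 0 ≤ a r) (hb : ∀ r, 0 ≤ b r)
    (hda : ∀ r, 0 < a r → 0 < d r) (hdb : ∀ r, 0 < b r → 0 < d r)
    (hpos : 0 < ∑ r, a r) (hsum : ∑ r, a r < ∑ r, b r) :
    (∑ r, a r * g r) / ∑ r, a r ≤ (∑ r, b r * g r) / ∑ r, b r := by
  obtain ⟨ra, -, hra⟩ :=
    exists_lt_of_sum_lt (s := univ) (f := 0) (g := a) (by simpa using hpos)
  obtain ⟨rb, -, hrb⟩ :=
    exists_lt_of_sum_lt (s := univ) (f := 0) (g := b) (by simpa using hpos.trans hsum)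
  obtain ⟨La, hLa⟩ := hA.exists_isMarginalLevel (hra : 0 < a ra)
  obtain ⟨Lb, hLb⟩ := hB.exists_isMarginalLevel (hrb : 0 < b rb)
  have hlt := hLa.lt hLb ha hb hdb hsum
  have hsq := hLa.sum_sq_mul_le hLb ha hb hda hlt
  have hcs := hLa.mul_sq_sum_le hLb ha hb hda hlt
  rw [hLa.sum_mul_eq ha, hLb.sum_mul_eq hb, div_le_div_iff₀ hpos (hpos.trans hsum)]
  nlinarith [mul_le_mul_of_nonneg_left hsq hpos.le]

end MarginalCost

theorem avg_cost_monotone_in_size_general {R : Type*} [Fintype R] {K : ℕ}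
    (c c' : R → ℝ → ℝ)
    (x0 : R → ℝ) (x : Fin K → R → ℝ)
    (hx0 : ∀ r, 0 ≤ x0 r) (hx : ∀ k r, 0 ≤ x k r)
    (X : R → ℝ) (hX : ∀ r, X r = x0 r + ∑ k, x k r)
    (htot : ∑ r, X r = 1)
    (hmono : ∀ r, StrictMonoOn (c r) (Set.Icc 0 1))
    (hconv : ∀ r, ConvexOn ℝ (Set.Icc 0 1) (c r))
    (hderiv : ∀ r, ∀ y ∈ Set.Icc (0:ℝ) 1, HasDerivAt (c r) (c' r y) y)
    (heqk : ∀ k r, 0 < x k r → ∀ s,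
      c r (X r) + x k r * c' r (X r) ≤ c s (X s) + x k s * c' s (X s)) :
    ∀ k l : Fin K, 0 < (∑ r, x k r) → (∑ r, x k r) < (∑ r, x l r) →
      (1 / ∑ r, x k r) * ∑ r, x k r * c r (X r) ≤
        (1 / ∑ r, x l r) * ∑ r, x l r * c r (X r) := by
  intro k l hTk hTkl
  have hxX : ∀ m r, x m r ≤ X r := fun m r => by
    rw [hX r]
    linarith [hx0 r, single_le_sum (fun m' _ => hx m' r) (mem_univ m)]
  have hX_nonneg : ∀ r, 0 ≤ X r := fun r =>
    hX r ▸ add_nonneg (hx0 r) (sum_nonneg fun m _ => hx m r)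
  have hX_mem : ∀ r, X r ∈ Set.Icc (0:ℝ) 1 := fun r =>
    ⟨hX_nonneg r, htot ▸ single_le_sum (fun s _ => hX_nonneg s) (mem_univ r)⟩
  have hd : ∀ m r, 0 < x m r → 0 < c' r (X r) := fun m r h =>
    (hconv r).hasDerivAt_pos_of_strictMonoOn (hmono r) ⟨le_rfl, zero_le_one⟩ (hX_mem r)
      (h.trans_le (hxX m r)) (hderiv r _ (hX_mem r))
  simp only [one_div_mul_eq_div]
  exact IsMarginalEquilibrium.sum_mul_div_le (heqk k) (heqk l) (hx k) (hx l) (hd k) (hd l) hTk hTkl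

/-- At a composite equilibrium, a smaller coalition has a (weakly) smaller average cost
than a larger one. -/
theorem avg_cost_monotone_in_size {R : Type*} [Fintype R] [Nonempty R] {K : ℕ}
    (c c' : R → ℝ → ℝ)
    (x0 : R → ℝ) (x : Fin K → R → ℝ)
    (hx0 : ∀ r, 0 ≤ x0 r) (hx : ∀ k r, 0 ≤ x k r)
    (X : R → ℝ) (hX : ∀ r, X r = x0 r + ∑ k, x k r)
    (htot : ∑ r, X r = 1)
    (hmono : ∀ r, StrictMonoOn (c r) (Set.Icc 0 1))
    (hconv : ∀ r, ConvexOn ℝ (Set.Icc 0 1) (c r))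
    (hderiv : ∀ r, ∀ y ∈ Set.Icc (0:ℝ) 1, HasDerivAt (c r) (c' r y) y)
    (hcnonneg : ∀ r, ∀ y ∈ Set.Icc (0:ℝ) 1, 0 ≤ c r y)
    (heq0 : ∀ r, 0 < x0 r → ∀ s, c r (X r) ≤ c s (X s))
    (heqk : ∀ k r, 0 < x k r → ∀ s,
      c r (X r) + x k r * c' r (X r) ≤ c s (X s) + x k s * c' s (X s)) :
    ∀ k l : Fin K, 0 < (∑ r, x k r) → (∑ r, x k r) < (∑ r, x l r) →
      (1 / ∑ r, x k r) * ∑ r, x k r * c r (X r) ≤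
        (1 / ∑ r, x l r) * ∑ r, x l r * c r (X r) :=
  avg_cost_monotone_in_size_general c c' x0 x hx0 hx X hX htot hmono hconv hderiv heqk
end

section
/- Let x be a composite equilibrium whose aggregate flow differs from the Wardrop flow w. Then every arc used by the individuals is underloaded (x^0_r > 0 implies x_r < w_r), and every overloaded arc (x_r > w_r) is used by the largest coalition. -/
private lemma deriv_pos_aux {f : ℝ → ℝ} {f' b : ℝ}
    (hconv : ConvexOn ℝ (Set.Icc 0 1) f) (hmono : StrictMonoOn f (Set.Icc 0 1))
    (hd : HasDerivAt f f' b) (hb0 : 0 < b) (hb1 : b ≤ 1) : 0 < f' := by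
  have h0 : (0:ℝ) ∈ Set.Icc (0:ℝ) 1 := by constructor <;> norm_num
  have hbI : b ∈ Set.Icc (0:ℝ) 1 := ⟨hb0.le, hb1⟩
  have hslope : slope f 0 b ≤ f' := hconv.slope_le_of_hasDerivAt h0 hbI hb0 hd
  have hfs : f 0 < f b := hmono h0 hbI hb0
  have : 0 < slope f 0 b := by
    rw [slope_def_field]
    have h1 : (0:ℝ) < f b - f 0 := by linarith
    have h2 : (0:ℝ) < b - 0 := by linarith
    exact div_pos h1 h2
  linarith

/-- If the aggregate flow of a composite equilibrium differs from the Wardrop flow, then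
every arc used by the individuals is underloaded, and every overloaded arc is used by the
largest coalition. -/
theorem individuals_underloaded_overloaded_by_largest {R : Type*} [Fintype R] [Nonempty R]
    {K : ℕ}
    (c c' : R → ℝ → ℝ)
    (x0 : R → ℝ) (x : Fin K → R → ℝ)
    (hx0 : ∀ r, 0 ≤ x0 r) (hx : ∀ k r, 0 ≤ x k r)
    (X : R → ℝ) (hX : ∀ r, X r = x0 r + ∑ k, x k r)
    (htot : ∑ r, X r = 1)
    (hmono : ∀ r, StrictMonoOn (c r) (Set.Icc 0 1))
    (hconv : ∀ r, ConvexOn ℝ (Set.Icc 0 1) (c r))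
    (hderiv : ∀ r, ∀ y ∈ Set.Icc (0:ℝ) 1, HasDerivAt (c r) (c' r y) y)
    (hcnonneg : ∀ r, ∀ y ∈ Set.Icc (0:ℝ) 1, 0 ≤ c r y)
    (heq0 : ∀ r, 0 < x0 r → ∀ s, c r (X r) ≤ c s (X s))
    (heqk : ∀ k r, 0 < x k r → ∀ s,
      c r (X r) + x k r * c' r (X r) ≤ c s (X s) + x k s * c' s (X s))
    (w : R → ℝ) (hw : ∀ r, 0 ≤ w r) (hwsum : ∑ r, w r = 1)
    (hwEq : ∀ r, 0 < w r → ∀ s, c r (w r) ≤ c s (w s))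
    (W : ℝ) (hW : ∀ r, 0 < w r → c r (w r) = W)
    (hne : X ≠ w)
    (k1 : Fin K) (hk1 : ∀ k : Fin K, (∑ r, x k r) ≤ (∑ r, x k1 r)) :
    (∀ r, 0 < x0 r → X r < w r) ∧ (∀ r, w r < X r → 0 < x k1 r) := by
  classical
  -- basic bounds
  have hXnn : ∀ r, 0 ≤ X r := by
    intro r
    rw [hX r]
    have : 0 ≤ ∑ k, x k r := Finset.sum_nonneg fun k _ => hx k r
    linarith [hx0 r]
  have hXle1 : ∀ r, X r ≤ 1 := by
    intro r
    calc X r ≤ ∑ s, X s := Finset.single_le_sum (fun s _ => hXnn s) (Finset.mem_univ r)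
    _ = 1 := htot
  have hXI : ∀ r, X r ∈ Set.Icc (0:ℝ) 1 := fun r => ⟨hXnn r, hXle1 r⟩
  have hwle1 : ∀ r, w r ≤ 1 := by
    intro r
    calc w r ≤ ∑ s, w s := Finset.single_le_sum (fun s _ => hw s) (Finset.mem_univ r)
    _ = 1 := hwsum
  have hwI : ∀ r, w r ∈ Set.Icc (0:ℝ) 1 := fun r => ⟨hw r, hwle1 r⟩
  -- some arc used at w
  obtain ⟨t, ht⟩ : ∃ t, 0 < w t := by
    by_contra h
    push_neg at h
    have : ∑ r, w r ≤ 0 := Finset.sum_nonpos fun r _ => h r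
    linarith
  have hWle : ∀ s, W ≤ c s (w s) := by
    intro s
    have := hwEq t ht s
    rw [hW t ht] at this
    exact this
  -- an underloaded arc exists
  obtain ⟨u, hu⟩ : ∃ u, X u < w u := by
    by_contra h
    push_neg at h
    apply hne
    funext r
    by_contra hr
    have hlt : w r < X r := lt_of_le_of_ne (h r) (Ne.symm hr)
    have : ∑ s, w s < ∑ s, X s :=
      Finset.sum_lt_sum (fun s _ => h s) ⟨r, Finset.mem_univ r, hlt⟩
    rw [htot, hwsum] at this
    exact lt_irrefl _ this
  have hwu : 0 < w u := lt_of_le_of_lt (hXnn u) hu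
  have hcu : c u (X u) < W := by
    have := (hmono u) (hXI u) (hwI u) hu
    rw [hW u hwu] at this
    exact this
  -- part (a)
  have partA : ∀ r, 0 < x0 r → X r < w r := by
    intro r hr
    have h1 : c r (X r) < W := lt_of_le_of_lt (heq0 r hr u) hcu
    have h2 : c r (X r) < c r (w r) := lt_of_lt_of_le h1 (hWle r)
    by_contra hc
    push_neg at hc
    have := (hmono r).monotoneOn (hwI r) (hXI r) hc
    linarith
  refine ⟨partA, ?_⟩
  -- part (b)
  intro r hover
  by_contra hk1r
  push_neg at hk1r
  have hk1r0 : x k1 r = 0 := le_antisymm hk1r (hx k1 r)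
  have hXr : 0 < X r := lt_of_le_of_lt (hw r) hover
  have hx0r : x0 r = 0 := by
    by_contra h
    have := partA r (lt_of_le_of_ne (hx0 r) (Ne.symm h))
    linarith
  obtain ⟨k, hk⟩ : ∃ k, 0 < x k r := by
    by_contra h
    push_neg at h
    have : ∑ k, x k r ≤ 0 := Finset.sum_nonpos fun k _ => h k
    have := hX r
    rw [hx0r] at this
    linarith
  -- derivative positive at X r
  have hc'r : 0 < c' r (X r) :=
    deriv_pos_aux (hconv r) (hmono r) (hderiv r (X r) (hXI r)) hXr (hXle1 r)
  -- on every arc used by k1, x k1 s < x k s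
  have key : ∀ s, 0 < x k1 s → x k1 s ≤ x k s := by
    intro s hs
    have h1 : c s (X s) + x k1 s * c' s (X s) ≤ c r (X r) := by
      have := heqk k1 s hs r
      rw [hk1r0] at this
      simpa using this
    have h2 : c r (X r) + x k r * c' r (X r) ≤ c s (X s) + x k s * c' s (X s) :=
      heqk k r hk s
    have h3 : 0 < x k r * c' r (X r) := mul_pos hk hc'r
    have hXs : 0 < X s := by
      have : x k1 s ≤ ∑ j, x j s :=
        Finset.single_le_sum (fun j _ => hx j s) (Finset.mem_univ k1)
      have := hX s
      nlinarith [hx0 s]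
    have hc's : 0 < c' s (X s) :=
      deriv_pos_aux (hconv s) (hmono s) (hderiv s (X s) (hXI s)) hXs (hXle1 s)
    nlinarith
  -- weight contradiction
  have hsum : ∑ s, x k1 s ≤ ∑ s, x k s - x k r := by
    have e1 : ∑ s, x k1 s = ∑ s ∈ Finset.univ.filter (fun s => 0 < x k1 s), x k1 s := by
      rw [Finset.sum_filter_of_ne]
      intro s _ hs
      exact lt_of_le_of_ne (hx k1 s) (Ne.symm hs)
    have e2 : ∑ s ∈ Finset.univ.filter (fun s => 0 < x k1 s), x k1 s
        ≤ ∑ s ∈ Finset.univ.filter (fun s => 0 < x k1 s), x k s :=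
      Finset.sum_le_sum fun s hs => key s (Finset.mem_filter.mp hs).2
    have hrnot : r ∉ Finset.univ.filter (fun s => 0 < x k1 s) := by
      simp [hk1r0]
    have e3 : ∑ s ∈ Finset.univ.filter (fun s => 0 < x k1 s), x k s
        ≤ ∑ s ∈ Finset.univ.erase r, x k s := by
      apply Finset.sum_le_sum_of_subset_of_nonneg
      · intro s hs
        rcases Finset.mem_filter.mp hs with ⟨_, hsp⟩
        refine Finset.mem_erase.mpr ⟨?_, Finset.mem_univ s⟩
        rintro rfl
        rw [hk1r0] at hsp
        exact lt_irrefl _ hsp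
      · exact fun s _ _ => hx k s
    have e4 : ∑ s ∈ Finset.univ.erase r, x k s = ∑ s, x k s - x k r := by
      rw [eq_sub_iff_add_eq, Finset.sum_erase_add _ _ (Finset.mem_univ r)]
    linarith
  have := hk1 k
  linarith
end

section
/- Let x be the composite equilibrium of a composite game and w the Wardrop equilibrium of the corresponding nonatomic game with equilibrium cost W. If the aggregate flow of x differs from w, then the individuals' cost Y^0(x), the average cost Y^k(x) of every coalition k, and the social cost Y(x) = Σ_r x_r c_r(x_r) are all strictly less than W. -/
open Set Filter

lemma aux_deriv_nonneg_at_zero {f : ℝ → ℝ} {d : ℝ}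
    (hm : StrictMonoOn f (Set.Icc 0 1)) (hd : HasDerivAt f d 0) : 0 ≤ d := by
  have h := (hasDerivWithinAt_iff_tendsto_slope' (s := Set.Ioi (0:ℝ))
    notMem_Ioi_self).mp hd.hasDerivWithinAt
  refine ge_of_tendsto h ?_
  have hmem : Set.Ioc (0:ℝ) 1 ∈ nhdsWithin (0:ℝ) (Set.Ioi 0) :=
    Ioc_mem_nhdsGT_of_mem ⟨le_refl 0, zero_lt_one⟩
  filter_upwards [hmem] with u hu
  rw [slope_def_field]
  have h1 : f 0 < f u := hm ⟨le_refl 0, zero_le_one⟩ ⟨hu.1.le, hu.2⟩ hu.1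
  have h2 : (0:ℝ) < u - 0 := by linarith [hu.1]
  apply div_nonneg <;> linarith

/-- If the aggregate flow of a composite equilibrium differs from the Wardrop flow, then
the individuals' cost, the average cost of every coalition, and the social cost are all
strictly less than the Wardrop equilibrium cost `W`. -/
theorem composite_beats_wardrop {R : Type*} [Fintype R] [Nonempty R] {K : ℕ}
    (c c' : R → ℝ → ℝ)
    (x0 : R → ℝ) (x : Fin K → R → ℝ)
    (hx0 : ∀ r, 0 ≤ x0 r) (hx : ∀ k r, 0 ≤ x k r)
    (X : R → ℝ) (hX : ∀ r, X r = x0 r + ∑ k, x k r)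
    (htot : ∑ r, X r = 1)
    (hmono : ∀ r, StrictMonoOn (c r) (Set.Icc 0 1))
    (hconv : ∀ r, ConvexOn ℝ (Set.Icc 0 1) (c r))
    (hderiv : ∀ r, ∀ y ∈ Set.Icc (0:ℝ) 1, HasDerivAt (c r) (c' r y) y)
    (hcnonneg : ∀ r, ∀ y ∈ Set.Icc (0:ℝ) 1, 0 ≤ c r y)
    (heq0 : ∀ r, 0 < x0 r → ∀ s, c r (X r) ≤ c s (X s))
    (heqk : ∀ k r, 0 < x k r → ∀ s,
      c r (X r) + x k r * c' r (X r) ≤ c s (X s) + x k s * c' s (X s))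
    (w : R → ℝ) (hw : ∀ r, 0 ≤ w r) (hwsum : ∑ r, w r = 1)
    (hwEq : ∀ r, 0 < w r → ∀ s, c r (w r) ≤ c s (w s))
    (W : ℝ) (hW : ∀ r, 0 < w r → c r (w r) = W)
    (hne : X ≠ w) :
    (0 < ∑ r, x0 r →
      Finset.univ.inf' Finset.univ_nonempty (fun s => c s (X s)) < W) ∧
    (∀ k : Fin K, 0 < ∑ r, x k r →
      (1 / ∑ r, x k r) * ∑ r, x k r * c r (X r) < W) ∧
    (∑ r, X r * c r (X r)) < W := by
  classical
  -- basic facts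
  have hXnn : ∀ r, 0 ≤ X r := fun r => by
    rw [hX r]; exact add_nonneg (hx0 r) (Finset.sum_nonneg fun k _ => hx k r)
  have hXle1 : ∀ r, X r ≤ 1 := fun r => by
    rw [← htot]; exact Finset.single_le_sum (fun i _ => hXnn i) (Finset.mem_univ r)
  have hXmem : ∀ r, X r ∈ Set.Icc (0:ℝ) 1 := fun r => ⟨hXnn r, hXle1 r⟩
  have hwle1 : ∀ r, w r ≤ 1 := fun r => by
    rw [← hwsum]; exact Finset.single_le_sum (fun i _ => hw i) (Finset.mem_univ r)
  have hwmem : ∀ r, w r ∈ Set.Icc (0:ℝ) 1 := fun r => ⟨hw r, hwle1 r⟩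
  -- support line inequality
  have supp : ∀ r, ∀ y ∈ Set.Icc (0:ℝ) 1, ∀ z ∈ Set.Icc (0:ℝ) 1,
      c r z + c' r z * (y - z) ≤ c r y := by
    intro r y hy z hz
    rcases lt_trichotomy z y with h | h | h
    · have hs := (hconv r).le_slope_of_hasDerivAt hz hy h (hderiv r z hz)
      rw [slope_def_field] at hs
      have hyz : 0 < y - z := sub_pos.2 h
      have := (le_div_iff₀ hyz).mp hs
      linarith
    · subst h; simp
    · have hs := (hconv r).slope_le_of_hasDerivAt hy hz h (hderiv r z hz)
      rw [slope_def_field] at hs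
      have hyz : 0 < z - y := sub_pos.2 h
      have := (div_le_iff₀ hyz).mp hs
      nlinarith
  -- derivative positivity on used arcs, nonnegativity everywhere
  have dposX : ∀ r, 0 < X r → 0 < c' r (X r) := by
    intro r hr
    have h := supp r 0 ⟨le_refl 0, zero_le_one⟩ (X r) (hXmem r)
    have hlt : c r 0 < c r (X r) :=
      hmono r ⟨le_refl 0, zero_le_one⟩ (hXmem r) hr
    nlinarith
  have dnn : ∀ r, 0 ≤ c' r (X r) := by
    intro r
    rcases eq_or_lt_of_le (hXnn r) with h | h
    · apply aux_deriv_nonneg_at_zero (hmono r)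
      rw [← h]
      exact hderiv r 0 ⟨le_refl 0, zero_le_one⟩
    · exact (dposX r h).le
  -- Wardrop facts
  have hWle : ∀ r, W ≤ c r (w r) := by
    obtain ⟨r1, hr1⟩ : ∃ r, 0 < w r := by
      by_contra h; push_neg at h
      have : (∑ r, w r) ≤ 0 := Finset.sum_nonpos fun i _ => h i
      linarith [hwsum]
    intro s
    have := hwEq r1 hr1 s
    rw [hW r1 hr1] at this
    exact this
  -- an arc where the composite aggregate is below the Wardrop flow
  obtain ⟨s0, hs0⟩ : ∃ s0, X s0 < w s0 := by
    by_contra h; push_neg at h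
    apply hne
    funext r
    have heqall := (Finset.sum_eq_sum_iff_of_le (fun i _ => h i)).mp
      (by rw [hwsum, htot])
    exact (heqall r (Finset.mem_univ r)).symm
  have hws0 : 0 < w s0 := lt_of_le_of_lt (hXnn s0) hs0
  have hWs0 : c s0 (w s0) = W := hW s0 hws0
  have has0 : c s0 (X s0) < W := by
    rw [← hWs0]
    exact hmono s0 (hXmem s0) (hwmem s0) hs0
  -- the key per-coalition estimate
  have hcoal : ∀ t : R → ℝ, (∀ r, 0 ≤ t r) → (∀ r, t r ≤ X r) →
      (∀ r, 0 < t r → ∀ s, c r (X r) + t r * c' r (X r) ≤ c s (X s) + t s * c' s (X s)) →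
      0 < ∑ r, t r → ∑ r, t r * c r (X r) < (∑ r, t r) * W := by
    intro t htnn htX hteq hT
    obtain ⟨r0, hr0⟩ : ∃ r, 0 < t r := by
      by_contra h; push_neg at h
      have : (∑ r, t r) ≤ 0 := Finset.sum_nonpos fun i _ => h i
      linarith
    set μ := c r0 (X r0) + t r0 * c' r0 (X r0) with hμ
    have key : ∑ r, t r * (c r (X r) - W) < 0 := by
      rcases le_or_gt μ W with hm | hm
      · -- small marginal cost: every used arc has cost below W
        have hlt : ∑ r, t r * (c r (X r) - W) < ∑ _r : R, (0:ℝ) := by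
          apply Finset.sum_lt_sum
          · intro r _
            rcases eq_or_lt_of_le (htnn r) with h0 | h0
            · rw [← h0]; simp
            · have h1 := hteq r h0 r0
              have h2 : 0 ≤ t r * c' r (X r) := mul_nonneg (htnn r) (dnn r)
              have h3 : c r (X r) - W ≤ 0 := by linarith
              exact mul_nonpos_of_nonneg_of_nonpos (htnn r) h3
          · refine ⟨r0, Finset.mem_univ r0, ?_⟩
            have hd0 : 0 < c' r0 (X r0) := dposX r0 (lt_of_lt_of_le hr0 (htX r0))
            have : c r0 (X r0) - W < 0 := by
              have : c r0 (X r0) = μ - t r0 * c' r0 (X r0) := by rw [hμ]; ring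
              nlinarith
            exact mul_neg_of_pos_of_neg hr0 this
        simpa using hlt
      · -- large marginal cost
        have hbound : ∀ r ∈ Finset.univ, t r * (c r (X r) - W) ≤
            (μ - W) * (X r - w r) -
            (if X r < w r then c' r (X r) * (w r - X r)^2 else 0) := by
          intro r _
          by_cases hrB : X r < w r
          · rw [if_pos hrB]
            have hwr : 0 < w r := lt_of_le_of_lt (hXnn r) hrB
            have hWr : c r (w r) = W := hW r hwr
            have hsupp := supp r (w r) (hwmem r) (X r) (hXmem r)
            rw [hWr] at hsupp
            have hμr := hteq r0 hr0 r
            have h1 : c' r (X r) * (w r - X r) ≤ W - c r (X r) := by linarith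
            have h2 : (μ - W) + c' r (X r) * (w r - X r) ≤ t r * c' r (X r) := by
              linarith
            have h3 : (0:ℝ) < w r - X r := by linarith
            have h4 := dnn r
            have h5 := htnn r
            nlinarith [mul_le_mul_of_nonneg_right h2 h3.le,
              mul_le_mul_of_nonneg_left h1 h5]
          · rw [if_neg hrB]
            push_neg at hrB
            rcases eq_or_lt_of_le (htnn r) with ht0 | htr
            · rw [← ht0]
              have : (0:ℝ) ≤ (μ - W) * (X r - w r) :=
                mul_nonneg (by linarith) (by linarith)
              simpa using this
            · have haW : W ≤ c r (X r) := by
                have hmw : c r (w r) ≤ c r (X r) :=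
                  (hmono r).monotoneOn (hwmem r) (hXmem r) hrB
                linarith [hWle r]
              have hμr := hteq r htr r0
              by_cases hwr : 0 < w r
              · have hWr : c r (w r) = W := hW r hwr
                have hsupp := supp r (w r) (hwmem r) (X r) (hXmem r)
                rw [hWr] at hsupp
                have h1 : c r (X r) - W ≤ c' r (X r) * (X r - w r) := by nlinarith
                have h2 : t r * c' r (X r) ≤ μ - W := by linarith
                nlinarith [mul_le_mul_of_nonneg_left h1 (htnn r),
                  mul_le_mul_of_nonneg_right h2 (sub_nonneg.2 hrB)]
              · have hw0 : w r = 0 := le_antisymm (not_lt.1 hwr) (hw r)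
                have h1 : c r (X r) ≤ μ := by
                  have := mul_nonneg (htnn r) (dnn r)
                  linarith
                have h2 : t r * (c r (X r) - W) ≤ t r * (μ - W) :=
                  mul_le_mul_of_nonneg_left (by linarith) (htnn r)
                have h3 : t r * (μ - W) ≤ X r * (μ - W) :=
                  mul_le_mul_of_nonneg_right (htX r) (by linarith)
                rw [hw0]
                nlinarith
        have hsum1 : ∑ r, t r * (c r (X r) - W) ≤
            ∑ r, ((μ - W) * (X r - w r) -
              (if X r < w r then c' r (X r) * (w r - X r)^2 else 0)) :=
          Finset.sum_le_sum hbound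
        have hzero : ∑ r, (X r - w r) = 0 := by
          rw [Finset.sum_sub_distrib, htot, hwsum]; ring
        have hsum2 : ∑ r, ((μ - W) * (X r - w r) -
            (if X r < w r then c' r (X r) * (w r - X r)^2 else 0)) =
            - ∑ r, (if X r < w r then c' r (X r) * (w r - X r)^2 else 0) := by
          rw [Finset.sum_sub_distrib, ← Finset.mul_sum, hzero, mul_zero]
          ring
        have hds0 : 0 < c' s0 (X s0) := by
          have hμr := hteq r0 hr0 s0
          have h1 : 0 < t s0 * c' s0 (X s0) := by linarith [has0]
          rcases eq_or_lt_of_le (dnn s0) with h | h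
          · exfalso
            rw [← h] at h1
            simp at h1
          · exact h
        have hpos : 0 < ∑ r, (if X r < w r then c' r (X r) * (w r - X r)^2 else 0) := by
          apply Finset.sum_pos'
          · intro r _
            by_cases h : X r < w r
            · rw [if_pos h]; exact mul_nonneg (dnn r) (sq_nonneg _)
            · rw [if_neg h]
          · refine ⟨s0, Finset.mem_univ s0, ?_⟩
            rw [if_pos hs0]
            have : (0:ℝ) < (w s0 - X s0)^2 := by nlinarith
            exact mul_pos hds0 this
        linarith
    have hexp : ∑ r, t r * c r (X r) - (∑ r, t r) * W = ∑ r, t r * (c r (X r) - W) := by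
      rw [Finset.sum_mul]
      rw [← Finset.sum_sub_distrib]
      exact Finset.sum_congr rfl fun r _ => by ring
    linarith
  -- assemble the three conclusions
  have hineq1 : Finset.univ.inf' Finset.univ_nonempty (fun s => c s (X s)) < W := by
    calc Finset.univ.inf' Finset.univ_nonempty (fun s => c s (X s)) ≤ c s0 (X s0) :=
          Finset.inf'_le _ (Finset.mem_univ s0)
      _ < W := has0
  have htXk : ∀ k r, x k r ≤ X r := by
    intro k r
    have h1 : x k r ≤ ∑ k', x k' r :=
      Finset.single_le_sum (fun i _ => hx i r) (Finset.mem_univ k)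
    rw [hX r]
    linarith [hx0 r]
  have hcoalk : ∀ k : Fin K, 0 < ∑ r, x k r →
      ∑ r, x k r * c r (X r) < (∑ r, x k r) * W :=
    fun k hk => hcoal (x k) (hx k) (htXk k) (heqk k) hk
  refine ⟨fun _ => hineq1, ?_, ?_⟩
  · intro k hk
    have h1 := hcoalk k hk
    have h2 : (1 / ∑ r, x k r) * (∑ r, x k r * c r (X r)) <
        (1 / ∑ r, x k r) * ((∑ r, x k r) * W) := by
      apply mul_lt_mul_of_pos_left h1
      positivity
    have h3 : (1 / ∑ r, x k r) * ((∑ r, x k r) * W) = W := by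
      field_simp
    linarith
  · -- social cost
    have hsplit : ∑ r, X r * c r (X r) =
        (∑ r, x0 r * c r (X r)) + ∑ k, ∑ r, x k r * c r (X r) := by
      calc ∑ r, X r * c r (X r)
          = ∑ r, (x0 r * c r (X r) + ∑ k, x k r * c r (X r)) :=
            Finset.sum_congr rfl fun r _ => by rw [hX r, add_mul, Finset.sum_mul]
        _ = (∑ r, x0 r * c r (X r)) + ∑ r, ∑ k, x k r * c r (X r) :=
            Finset.sum_add_distrib
        _ = (∑ r, x0 r * c r (X r)) + ∑ k, ∑ r, x k r * c r (X r) := by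
            rw [Finset.sum_comm]
    have hweights : (∑ r, x0 r) + ∑ k, ∑ r, x k r = 1 := by
      rw [← htot]
      calc (∑ r, x0 r) + ∑ k, ∑ r, x k r
          = (∑ r, x0 r) + ∑ r, ∑ k, x k r := by rw [Finset.sum_comm]
        _ = ∑ r, (x0 r + ∑ k, x k r) := Finset.sum_add_distrib.symm
        _ = ∑ r, X r := Finset.sum_congr rfl fun r _ => (hX r).symm
    have h0term : ∀ r, x0 r * c r (X r) ≤ x0 r * W := by
      intro r
      rcases eq_or_lt_of_le (hx0 r) with h | h
      · rw [← h]; simp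
      · have := heq0 r h s0
        exact mul_le_mul_of_nonneg_left (by linarith) (hx0 r)
    have h0le : ∑ r, x0 r * c r (X r) ≤ (∑ r, x0 r) * W := by
      rw [Finset.sum_mul]
      exact Finset.sum_le_sum fun r _ => h0term r
    have hkle : ∀ k, ∑ r, x k r * c r (X r) ≤ (∑ r, x k r) * W := by
      intro k
      rcases eq_or_lt_of_le (Finset.sum_nonneg (fun r (_ : r ∈ Finset.univ) => hx k r)) with h | h
      · have hall : ∀ r ∈ Finset.univ, x k r = 0 :=
          (Finset.sum_eq_zero_iff_of_nonneg (fun r _ => hx k r)).mp h.symm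
        have : ∑ r, x k r * c r (X r) = 0 :=
          Finset.sum_eq_zero fun r hr => by rw [hall r hr]; ring
        rw [this, ← h]
        simp
      · exact (hcoalk k h).le
    have hsumk : ∑ k, ∑ r, x k r * c r (X r) ≤ ∑ k, (∑ r, x k r) * W :=
      Finset.sum_le_sum fun k _ => hkle k
    have hWtotal : (∑ r, x0 r) * W + ∑ k, (∑ r, x k r) * W = W := by
      rw [← Finset.sum_mul, ← add_mul, hweights, one_mul]
    rcases eq_or_lt_of_le (Finset.sum_nonneg (fun r (_ : r ∈ Finset.univ) => hx0 r)) with h0 | h0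
    · -- no individuals: some coalition has positive mass
      have hmass : 0 < ∑ k, ∑ r, x k r := by
        have : (∑ k, ∑ r, x k r) = 1 := by rw [← hweights, ← h0]; ring
        rw [this]; exact one_pos
      obtain ⟨k0, hk0⟩ : ∃ k, 0 < ∑ r, x k r := by
        by_contra h; push_neg at h
        have : (∑ k, ∑ r, x k r) ≤ 0 := Finset.sum_nonpos fun i _ => h i
        linarith
      have hstrict : ∑ k, ∑ r, x k r * c r (X r) < ∑ k, (∑ r, x k r) * W :=
        Finset.sum_lt_sum (fun k _ => hkle k) ⟨k0, Finset.mem_univ k0, hcoalk k0 hk0⟩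
      rw [hsplit]
      linarith
    · -- individuals have positive mass
      obtain ⟨r1, hr1⟩ : ∃ r, 0 < x0 r := by
        by_contra h; push_neg at h
        have : (∑ r, x0 r) ≤ 0 := Finset.sum_nonpos fun i _ => h i
        linarith
      have hstrict0 : ∑ r, x0 r * c r (X r) < (∑ r, x0 r) * W := by
        rw [Finset.sum_mul]
        refine Finset.sum_lt_sum (fun r _ => h0term r) ⟨r1, Finset.mem_univ r1, ?_⟩
        have := heq0 r1 hr1 s0
        exact mul_lt_mul_of_pos_left (by linarith) hr1
      rw [hsplit]
      linarith
end

section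
/- Consider two composite games differing only in that, in the second, a group of weight δT (0 < δT < T^l) leaves coalition l to become individuals. Let x and y be the respective composite equilibria. Then the individuals' cost weakly increases: min_r c_r(x_r) ≤ min_r c_r(y_r). -/
/-!
Suppose the individuals' cost strictly drops from `Γ₀` to `Γ₁`. Every arc used by individuals in
`Γ₁` then costs less, hence carries less aggregate flow, than in `Γ₀`: the individuals of `Γ₁` all
sit on the set `S` of arcs whose aggregate flow decreased. No coalition can move weight from `S`
to its complement, since that would lower its marginal cost on `S` and raise it off `S`, contradicting
marginal-cost minimality in one of the two games. So each coalition keeps on `S` all its weight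
except the `δ` leaving coalition `l`, which joins the individuals, and the aggregate flow on `S`
cannot decrease — although it decreased on every arc of `S`.
-/

open Finset

theorem HasDerivAt.nonneg_of_monotoneOn_Icc {f : ℝ → ℝ} {a b z f' : ℝ} (hab : a < b)
    (hf : MonotoneOn f (Set.Icc a b)) (hz : z ∈ Set.Icc a b) (hd : HasDerivAt f f' z) : 0 ≤ f' := by
  rw [← hd.hasDerivWithinAt.derivWithin (uniqueDiffOn_Icc hab z hz)]
  exact hf.derivWithin_nonneg

theorem Finset.exists_lt_mem_and_exists_lt_notMem {ι M : Type*} [Fintype ι] [DecidableEq ι]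
    [AddCommGroup M] [LinearOrder M] [IsOrderedAddMonoid M] {a b : ι → M} {d : M} (S : Finset ι)
    (hd : 0 ≤ d) (htot : ∑ i, b i = ∑ i, a i - d) (hS : ∑ i ∈ S, b i < ∑ i ∈ S, a i - d) :
    (∃ i ∈ S, b i < a i) ∧ ∃ i ∉ S, a i < b i := by
  refine ⟨exists_lt_of_sum_lt (hS.trans_le (sub_le_self _ hd)), ?_⟩
  have hcompl : ∑ i ∈ Sᶜ, a i < ∑ i ∈ Sᶜ, b i := by
    rw [eq_sub_of_add_eq' (sum_add_sum_compl S a), eq_sub_of_add_eq' (sum_add_sum_compl S b),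
      htot, sub_sub, sub_lt_sub_iff_left]
    exact lt_sub_iff_add_lt'.1 hS
  obtain ⟨i, hi, hlt⟩ := exists_lt_of_sum_lt hcompl
  exact ⟨i, mem_compl.1 hi, hlt⟩

theorem mem_Icc_of_sum_eq_one {ι : Type*} [Fintype ι] {f : ι → ℝ} (hf : 0 ≤ f)
    (hsum : ∑ i, f i = 1) (i : ι) : f i ∈ Set.Icc 0 1 :=
  ⟨hf i, hsum ▸ single_le_sum (fun j _ => hf j) (mem_univ i)⟩

structure IsIncreasingCost (I : Set ℝ) (f f' : ℝ → ℝ) : Prop where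
  strictMonoOn : StrictMonoOn f I
  monotoneOn_deriv : MonotoneOn f' I
  deriv_nonneg : ∀ z ∈ I, 0 ≤ f' z

namespace IsIncreasingCost

variable {I : Set ℝ} {f f' : ℝ → ℝ}

theorem of_convexOn {a b : ℝ} (hab : a < b) (hmono : StrictMonoOn f (Set.Icc a b))
    (hconv : ConvexOn ℝ (Set.Icc a b) f) (hderiv : ∀ z ∈ Set.Icc a b, HasDerivAt f (f' z) z) :
    IsIncreasingCost (Set.Icc a b) f f' where
  strictMonoOn := hmono
  monotoneOn_deriv z hz w hw hzw := by
    simpa only [(hderiv z hz).deriv, (hderiv w hw).deriv] using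
      hconv.monotoneOn_deriv (fun v hv => (hderiv v hv).differentiableAt) hz hw hzw
  deriv_nonneg z hz := (hderiv z hz).nonneg_of_monotoneOn_Icc hab hmono.monotoneOn hz

theorem add_mul_le_add_mul (h : IsIncreasingCost I f f') {z z' w w' : ℝ} (hz : z ∈ I)
    (hz' : z' ∈ I) (hzz' : z ≤ z') (hw : 0 ≤ w) (hww' : w ≤ w') :
    f z + w * f' z ≤ f z' + w' * f' z' :=
  add_le_add (h.strictMonoOn.monotoneOn hz hz' hzz')
    (mul_le_mul hww' (h.monotoneOn_deriv hz hz' hzz') (h.deriv_nonneg z hz) (hw.trans hww'))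

theorem add_mul_lt_add_mul (h : IsIncreasingCost I f f') {z z' w w' : ℝ} (hz : z ∈ I)
    (hz' : z' ∈ I) (hzz' : z < z') (hw : 0 ≤ w) (hww' : w ≤ w') :
    f z + w * f' z < f z' + w' * f' z' :=
  add_lt_add_of_lt_of_le (h.strictMonoOn hz hz' hzz')
    (mul_le_mul hww' (h.monotoneOn_deriv hz hz' hzz'.le) (h.deriv_nonneg z hz) (hw.trans hww'))

end IsIncreasingCost

def IsMarginalCostMinimal {R : Type*} (c c' : R → ℝ → ℝ) (Z a : R → ℝ) : Prop :=
  ∀ r, 0 < a r → ∀ s, c r (Z r) + a r * c' r (Z r) ≤ c s (Z s) + a s * c' s (Z s)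

section Coalition

variable {R : Type*} {I : Set ℝ} {c c' : R → ℝ → ℝ} {X Y a b : R → ℝ}

theorem IsMarginalCostMinimal.le_of_lt_of_lt (hc : ∀ r, IsIncreasingCost I (c r) (c' r))
    (hX : ∀ r, X r ∈ I) (hY : ∀ r, Y r ∈ I) (ha : 0 ≤ a) (hb : 0 ≤ b)
    (hXa : IsMarginalCostMinimal c c' X a) (hYb : IsMarginalCostMinimal c c' Y b) {r s : R}
    (hr : Y r < X r) (hbr : b r < a r) (hs : X s ≤ Y s) : b s ≤ a s := by
  by_contra! has
  have hXrs := hXa r ((hb r).trans_lt hbr) s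
  have hYsr := hYb s ((ha s).trans_lt has) r
  have hdec := (hc r).add_mul_lt_add_mul (hY r) (hX r) hr (hb r) hbr.le
  have hinc := (hc s).add_mul_le_add_mul (hX s) (hY s) hs (ha s) has.le
  linarith

theorem IsMarginalCostMinimal.sum_sub_le_sum [Fintype R] (hc : ∀ r, IsIncreasingCost I (c r) (c' r))
    (hX : ∀ r, X r ∈ I) (hY : ∀ r, Y r ∈ I) (ha : 0 ≤ a) (hb : 0 ≤ b)
    (hXa : IsMarginalCostMinimal c c' X a) (hYb : IsMarginalCostMinimal c c' Y b) {d : ℝ}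
    (hd : 0 ≤ d) (htot : ∑ r, b r = ∑ r, a r - d) :
    ∑ r with Y r < X r, a r - d ≤ ∑ r with Y r < X r, b r := by
  classical
  by_contra! hS
  obtain ⟨⟨r, hrS, hbr⟩, s, hsS, has⟩ :=
    exists_lt_mem_and_exists_lt_notMem _ hd htot hS
  simp only [mem_filter, mem_univ, true_and, not_lt] at hrS hsS
  exact (hXa.le_of_lt_of_lt hc hX hY ha hb hYb hrS hbr hsS).not_gt has

end Coalition

section Transfer

variable {R κ : Type*} [Fintype R] [Fintype κ] [DecidableEq κ] {x0 y0 : R → ℝ} {x y : κ → R → ℝ}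
  {l : κ} {δ : ℝ}

theorem sum_aggregate_eq_of_transfer (hw0 : ∑ r, y0 r = ∑ r, x0 r + δ)
    (hw : ∀ k, ∑ r, y k r = ∑ r, x k r - (Pi.single l δ : κ → ℝ) k) :
    ∑ r, (y0 r + ∑ k, y k r) = ∑ r, (x0 r + ∑ k, x k r) := by
  simp only [sum_add_distrib, sum_comm (f := fun r k => y k r), sum_comm (f := fun r k => x k r),
    hw, sum_sub_distrib, hw0, sum_pi_single', mem_univ, if_true]
  ring

theorem sum_aggregate_le_of_transfer (S : Finset R) (hx0 : 0 ≤ x0) (hy0 : ∀ r ∉ S, y0 r = 0)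
    (hw0 : ∑ r, y0 r = ∑ r, x0 r + δ)
    (hw : ∀ k, ∑ r ∈ S, x k r - (Pi.single l δ : κ → ℝ) k ≤ ∑ r ∈ S, y k r) :
    ∑ r ∈ S, (x0 r + ∑ k, x k r) ≤ ∑ r ∈ S, (y0 r + ∑ k, y k r) := by
  have hy0S : ∑ r ∈ S, y0 r = ∑ r, y0 r :=
    sum_subset (subset_univ S) fun r _ hr => hy0 r hr
  have hx0S : ∑ r ∈ S, x0 r ≤ ∑ r, x0 r :=
    sum_le_sum_of_subset_of_nonneg (subset_univ S) fun r _ _ => hx0 r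
  have hk := sum_le_sum fun k (_ : k ∈ univ) => hw k
  simp only [sum_sub_distrib, sum_pi_single', mem_univ, if_true] at hk
  rw [sum_add_distrib, sum_add_distrib, sum_comm (f := fun r k => y k r),
    sum_comm (f := fun r k => x k r)]
  linarith

end Transfer

theorem individuals_cost_increases_when_coalition_shrinks_general
    {R : Type*} [Fintype R] [Nonempty R] {K : ℕ}
    (c c' : R → ℝ → ℝ)
    (hmono : ∀ r, StrictMonoOn (c r) (Set.Icc 0 1))
    (hconv : ∀ r, ConvexOn ℝ (Set.Icc 0 1) (c r))
    (hderiv : ∀ r, ∀ z ∈ Set.Icc (0:ℝ) 1, HasDerivAt (c r) (c' r z) z)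
    -- game Γ₀ : equilibrium (x0, x), aggregate X
    (x0 : R → ℝ) (x : Fin K → R → ℝ)
    (hx0 : ∀ r, 0 ≤ x0 r) (hx : ∀ k r, 0 ≤ x k r)
    (X : R → ℝ) (hXdef : ∀ r, X r = x0 r + ∑ k, x k r)
    (htotX : ∑ r, X r = 1)
    (heqkX : ∀ k r, 0 < x k r → ∀ s,
      c r (X r) + x k r * c' r (X r) ≤ c s (X s) + x k s * c' s (X s))
    -- game Γ₁ : equilibrium (y0, y), aggregate Y
    (y0 : R → ℝ) (y : Fin K → R → ℝ)
    (hy0 : ∀ r, 0 ≤ y0 r) (hy : ∀ k r, 0 ≤ y k r)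
    (Y : R → ℝ) (hYdef : ∀ r, Y r = y0 r + ∑ k, y k r)
    (heq0Y : ∀ r, 0 < y0 r → ∀ s, c r (Y r) ≤ c s (Y s))
    (heqkY : ∀ k r, 0 < y k r → ∀ s,
      c r (Y r) + y k r * c' r (Y r) ≤ c s (Y s) + y k s * c' s (Y s))
    -- the weight relations: a group of weight δ leaves coalition l
    (l : Fin K) (δ : ℝ) (hδpos : 0 < δ)
    (hw0 : ∑ r, y0 r = (∑ r, x0 r) + δ)
    (hwl : ∑ r, y l r = (∑ r, x l r) - δ)
    (hwk : ∀ k : Fin K, k ≠ l → ∑ r, y k r = ∑ r, x k r) :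
    Finset.univ.inf' Finset.univ_nonempty (fun r => c r (X r)) ≤
      Finset.univ.inf' Finset.univ_nonempty (fun r => c r (Y r)) := by
  have hcost r : IsIncreasingCost (Set.Icc 0 1) (c r) (c' r) :=
    .of_convexOn zero_lt_one (hmono r) (hconv r) (hderiv r)
  have hw k : ∑ r, y k r = ∑ r, x k r - (Pi.single l δ : Fin K → ℝ) k := by
    rcases eq_or_ne k l with rfl | hk
    · simpa using hwl
    · simpa [hk] using hwk k hk
  have hX := mem_Icc_of_sum_eq_one
    (fun r => hXdef r ▸ add_nonneg (hx0 r) (sum_nonneg fun k _ => hx k r)) htotX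
  have hY := mem_Icc_of_sum_eq_one
    (fun r => hYdef r ▸ add_nonneg (hy0 r) (sum_nonneg fun k _ => hy k r)) <| by
      simp only [hXdef, hYdef] at htotX ⊢
      rw [sum_aggregate_eq_of_transfer hw0 hw, htotX]
  by_contra! hlt
  obtain ⟨m, -, hm⟩ := exists_mem_eq_inf' univ_nonempty fun r => c r (Y r)
  have hmin r : c m (Y m) < c r (X r) := hm ▸ hlt.trans_le (inf'_le _ (mem_univ r))
  set S : Finset R := {r | Y r < X r} with hS
  have hdec r (h : c r (Y r) < c r (X r)) : r ∈ S := by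
    simpa [hS] using ((hcost r).strictMonoOn.lt_iff_lt (hY r) (hX r)).1 h
  have hindiv r (hr : r ∉ S) : y0 r = 0 := by
    by_contra h
    exact hr (hdec r ((heq0Y r ((hy0 r).lt_of_ne' h) m).trans_lt (hmin r)))
  have hshift : 0 ≤ (Pi.single l δ : Fin K → ℝ) := Pi.single_nonneg.2 hδpos.le
  have hcoal k := IsMarginalCostMinimal.sum_sub_le_sum hcost hX hY (hx k) (hy k) (heqkX k)
    (heqkY k) (hshift k) (hw k)
  have hdrop : ∑ r ∈ S, Y r < ∑ r ∈ S, X r :=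
    sum_lt_sum_of_nonempty ⟨m, hdec m (hmin m)⟩ fun r hr => by simpa [hS] using hr
  have hmass := sum_aggregate_le_of_transfer _ hx0 hindiv hw0 hcoal
  simp only [← hXdef, ← hYdef] at hmass
  exact hmass.not_gt hdrop

/-- When a group of weight `δ` leaves coalition `l` and becomes individuals (all other
coalition weights unchanged), the individuals' equilibrium cost weakly increases. -/
theorem individuals_cost_increases_when_coalition_shrinks
    {R : Type*} [Fintype R] [Nonempty R] {K : ℕ}
    (c c' : R → ℝ → ℝ)
    (hmono : ∀ r, StrictMonoOn (c r) (Set.Icc 0 1))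
    (hconv : ∀ r, ConvexOn ℝ (Set.Icc 0 1) (c r))
    (hderiv : ∀ r, ∀ z ∈ Set.Icc (0:ℝ) 1, HasDerivAt (c r) (c' r z) z)
    (hcnonneg : ∀ r, ∀ z ∈ Set.Icc (0:ℝ) 1, 0 ≤ c r z)
    -- game Γ₀ : equilibrium (x0, x), aggregate X
    (x0 : R → ℝ) (x : Fin K → R → ℝ)
    (hx0 : ∀ r, 0 ≤ x0 r) (hx : ∀ k r, 0 ≤ x k r)
    (X : R → ℝ) (hXdef : ∀ r, X r = x0 r + ∑ k, x k r)
    (htotX : ∑ r, X r = 1)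
    (heq0X : ∀ r, 0 < x0 r → ∀ s, c r (X r) ≤ c s (X s))
    (heqkX : ∀ k r, 0 < x k r → ∀ s,
      c r (X r) + x k r * c' r (X r) ≤ c s (X s) + x k s * c' s (X s))
    -- game Γ₁ : equilibrium (y0, y), aggregate Y
    (y0 : R → ℝ) (y : Fin K → R → ℝ)
    (hy0 : ∀ r, 0 ≤ y0 r) (hy : ∀ k r, 0 ≤ y k r)
    (Y : R → ℝ) (hYdef : ∀ r, Y r = y0 r + ∑ k, y k r)
    (heq0Y : ∀ r, 0 < y0 r → ∀ s, c r (Y r) ≤ c s (Y s))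
    (heqkY : ∀ k r, 0 < y k r → ∀ s,
      c r (Y r) + y k r * c' r (Y r) ≤ c s (Y s) + y k s * c' s (Y s))
    -- the weight relations: a group of weight δ leaves coalition l
    (l : Fin K) (δ : ℝ) (hδpos : 0 < δ) (hδlt : δ < ∑ r, x l r)
    (hw0 : ∑ r, y0 r = (∑ r, x0 r) + δ)
    (hwl : ∑ r, y l r = (∑ r, x l r) - δ)
    (hwk : ∀ k : Fin K, k ≠ l → ∑ r, y k r = ∑ r, x k r) :
    Finset.univ.inf' Finset.univ_nonempty (fun r => c r (X r)) ≤
      Finset.univ.inf' Finset.univ_nonempty (fun r => c r (Y r)) :=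
  individuals_cost_increases_when_coalition_shrinks_general c c' hmono hconv hderiv x0 x hx0 hx X
    hXdef htotX heqkX y0 y hy0 hy Y hYdef heq0Y heqkY l δ hδpos hw0 hwl hwk
end

section
/- In the two-arc network with c_1(x) = x + 10, c_2(x) = 10x + 1, consider the composite game with coalition 1 of weight T ∈ [1/5, 1/2], coalition 2 of weight 1/2, and individuals of weight 1/2 − T. The average equilibrium cost to coalition 1 equals (1/99)[919 − 4(25T + 4/T)], which is strictly increasing in T on [1/5, 2/5]; hence the average cost of a coalition at a composite equilibrium need not be monotonically decreasing in its own size when another coalition is present. -/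
/-- Two-arc example with two coalitions: coalition 1 of weight `T ∈ [1/5, 1/2]`,
coalition 2 of weight `1/2`, individuals of weight `1/2 - T`. At any composite
equilibrium, coalition 1's average cost equals `(1/99) * (919 - 4 * (25T + 4/T))`, and
this expression is strictly increasing in `T` on `[1/5, 2/5]`; hence the average cost of
a coalition need not be decreasing in its own size when another coalition is present. -/
theorem two_arc_two_coalitions_avg_cost
    (c : Fin 2 → ℝ → ℝ) (hc0 : ∀ x, c 0 x = x + 10) (hc1 : ∀ x, c 1 x = 10 * x + 1)
    (c' : Fin 2 → ℝ) (hc'0 : c' 0 = 1) (hc'1 : c' 1 = 10) :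
    (∀ T : ℝ, T ∈ Set.Icc (1/5 : ℝ) (1/2) →
      ∀ x0 x1 x2 : Fin 2 → ℝ,
        (∀ r, 0 ≤ x0 r) → (∀ r, 0 ≤ x1 r) → (∀ r, 0 ≤ x2 r) →
        (∑ r, x0 r) = 1/2 - T → (∑ r, x1 r) = T → (∑ r, x2 r) = 1/2 →
        (∀ r, 0 < x0 r → ∀ s,
          c r (x0 r + x1 r + x2 r) ≤ c s (x0 s + x1 s + x2 s)) →
        (∀ r, 0 < x1 r → ∀ s,
          c r (x0 r + x1 r + x2 r) + x1 r * c' r ≤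
            c s (x0 s + x1 s + x2 s) + x1 s * c' s) →
        (∀ r, 0 < x2 r → ∀ s,
          c r (x0 r + x1 r + x2 r) + x2 r * c' r ≤
            c s (x0 s + x1 s + x2 s) + x2 s * c' s) →
        (1 / T) * ∑ r, x1 r * c r (x0 r + x1 r + x2 r)
          = (1 / 99) * (919 - 4 * (25 * T + 4 / T))) ∧
    StrictMonoOn (fun T : ℝ => (1 / 99) * (919 - 4 * (25 * T + 4 / T)))
      (Set.Icc (1/5 : ℝ) (2/5)) := by
  constructor
  · rintro T ⟨hT1, hT2⟩ x0 x1 x2 h0n h1n h2n hs0 hs1 hs2 hI h1 h2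
    rw [Fin.sum_univ_two] at hs0 hs1 hs2
    have ha := h0n 0; have hb := h0n 1
    have hu := h1n 0; have hv := h1n 1
    have hp := h2n 0; have hq := h2n 1
    have hTpos : (0:ℝ) < T := by linarith
    -- coalition 2 uses arc 1
    have hq0 : 0 < x2 1 := by
      rcases lt_or_eq_of_le hq with h | h
      · exact h
      · exfalso
        have hp0 : 0 < x2 0 := by linarith
        have k := h2 0 hp0 1
        rw [hc0, hc1, hc'0, hc'1] at k
        linarith
    -- coalition 2 uses arc 0
    have hp0 : 0 < x2 0 := by
      rcases lt_or_eq_of_le hp with h | h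
      · exact h
      · exfalso
        have k := h2 1 hq0 0
        rw [hc0, hc1, hc'0, hc'1] at k
        linarith
    have E2 := h2 0 hp0 1
    have E2' := h2 1 hq0 0
    rw [hc0, hc1, hc'0, hc'1] at E2 E2'
    -- individuals do not use arc 0
    have ha0 : x0 0 = 0 := by
      rcases lt_or_eq_of_le ha with h | h
      · exfalso
        have k := hI 0 h 1
        rw [hc0, hc1] at k
        linarith
      · exact h.symm
    -- coalition 1's flow on arc 0
    have hU : x1 0 = (20 * T - 4) / 33 := by
      rcases lt_or_eq_of_le hu with h | h
      · have k1 := h1 0 h 1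
        rw [hc0, hc1, hc'0, hc'1] at k1
        have hv0 : 0 < x1 1 := by
          rcases lt_or_eq_of_le hv with h' | h'
          · exact h'
          · exfalso; linarith
        have k2 := h1 1 hv0 0
        rw [hc0, hc1, hc'0, hc'1] at k2
        linarith
      · have hv0 : 0 < x1 1 := by linarith
        have k2 := h1 1 hv0 0
        rw [hc0, hc1, hc'0, hc'1] at k2
        linarith
    have hP : x2 0 = (11 - 10 * T) / 33 := by linarith
    have hQ : x2 1 = 1/2 - (11 - 10 * T) / 33 := by linarith
    have hV : x1 1 = T - (20 * T - 4) / 33 := by linarith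
    have hB : x0 1 = 1/2 - T := by linarith
    rw [Fin.sum_univ_two, hc0, hc1, ha0, hU, hB, hV, hP, hQ]
    have hT0 : T ≠ 0 := ne_of_gt hTpos
    field_simp
    ring
  · rintro s ⟨hs1, hs2⟩ t ⟨ht1, ht2⟩ hst
    have hs0 : (0:ℝ) < s := by linarith
    have ht0 : (0:ℝ) < t := by linarith
    have hprod : s * t < 4 / 25 := by nlinarith
    have key : (25 * s + 4 / s) - (25 * t + 4 / t) = (t - s) * (4 - 25 * (s * t)) / (s * t) := by
      field_simp
      ring
    have hpos : 0 < (t - s) * (4 - 25 * (s * t)) / (s * t) := by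
      apply div_pos
      · nlinarith
      · positivity
    simp only
    nlinarith [key, hpos]
end
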